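/- For every integer N ≥ 2 and reals g, h > 0 with h < g < N²·h and N·√(gh) < 1, setting δ = N·√(gh) one has δ ∈ (0,1] and (1/2)·δ·log(1 + (N²gh/δ²)/(1 + g/δ + N·h/δ)) ≥ (1/2)·ln(4/3)·log(1 + N·√(gh)). -/

import Mathlib

/-!
Since δ² = N²gh, the signal term N²gh/δ² equals 1, and h ≤ g ≤ N²h gives g ≤ δ and Nh ≤ δ,
so the noise term 1 + g/δ + Nh/δ is at most 3 and the logarithm on the right is at least
log(4/3). The claim then reduces to ln(4/3)·log(1 + δ) = log(4/3)·ln(1 + δ) ≤ log(4/3)·δ.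
-/

open Real

lemma le_mul_sqrt_mul {c g h : ℝ} (hc : 0 ≤ c) (hg : 0 ≤ g) (hgh : g ≤ c ^ 2 * h) :
    g ≤ c * √(g * h) := by
  rw [← sqrt_sq hc, ← sqrt_mul (sq_nonneg c)]
  exact (le_sqrt hg (by nlinarith)).2 (by nlinarith)

lemma mul_le_mul_sqrt_mul {c g h : ℝ} (hc : 0 ≤ c) (hh : 0 ≤ h) (hhg : h ≤ g) :
    c * h ≤ c * √(g * h) := by
  refine mul_le_mul_of_nonneg_left ?_ hc
  exact (le_sqrt hh (by nlinarith)).2 (by nlinarith)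

lemma mul_sq_div_sq_mul_sqrt_eq_one {c g h : ℝ} (hc : c ≠ 0) (hg : 0 < g) (hh : 0 < h) :
    c ^ 2 * g * h / (c * √(g * h)) ^ 2 = 1 := by
  rw [mul_pow, sq_sqrt (by positivity), mul_assoc]
  exact div_self (by positivity)

lemma four_thirds_le_one_add_one_div {a b δ : ℝ} (hδ : 0 < δ) (ha₀ : 0 ≤ a) (ha : a ≤ δ)
    (hb₀ : 0 ≤ b) (hb : b ≤ δ) : 4 / 3 ≤ 1 + 1 / (1 + a / δ + b / δ) := by
  have hD₀ : 0 < 1 + a / δ + b / δ := by positivity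
  have hD : 1 + a / δ + b / δ ≤ 3 := by
    have := (div_le_one hδ).2 ha
    have := (div_le_one hδ).2 hb
    linarith
  have := one_div_le_one_div_of_le hD₀ hD
  linarith

lemma log_mul_logb_one_add_le {a b x : ℝ} (ha : 1 ≤ a) (hb : 1 < b) (hx : 0 ≤ x) :
    log a * logb b (1 + x) ≤ x * logb b a := by
  have hswap : log a * logb b (1 + x) = logb b a * log (1 + x) := by unfold logb; ring
  have hlog : log (1 + x) ≤ x := by linarith [log_le_sub_one_of_pos (by linarith : 0 < 1 + x)]
  rw [hswap, mul_comm x]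
  exact mul_le_mul_of_nonneg_left hlog (logb_nonneg hb ha)

theorem bursty_af_rate_intermediate (N : ℕ) (hN : 2 ≤ N) (g h : ℝ)
    (hg : 0 < g) (hh : 0 < h) (h1 : h < g) (h2 : g < (N : ℝ) ^ 2 * h)
    (h3 : (N : ℝ) * Real.sqrt (g * h) < 1) :
    (N : ℝ) * Real.sqrt (g * h) ∈ Set.Ioc (0 : ℝ) 1 ∧
    (1 / 2) * Real.log (4 / 3) * Real.logb 2 (1 + (N : ℝ) * Real.sqrt (g * h)) ≤
      (1 / 2) * ((N : ℝ) * Real.sqrt (g * h)) *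
        Real.logb 2 (1 + ((N : ℝ) ^ 2 * g * h / ((N : ℝ) * Real.sqrt (g * h)) ^ 2) /
          (1 + g / ((N : ℝ) * Real.sqrt (g * h)) +
            (N : ℝ) * h / ((N : ℝ) * Real.sqrt (g * h)))) := by
  have hN₀ : (0 : ℝ) < N := by exact_mod_cast (by omega : 0 < N)
  set δ := (N : ℝ) * √(g * h)
  have hδ : 0 < δ := by positivity
  refine ⟨⟨hδ, h3.le⟩, ?_⟩
  rw [mul_sq_div_sq_mul_sqrt_eq_one hN₀.ne' hg hh]
  have harg : 4 / 3 ≤ 1 + 1 / (1 + g / δ + N * h / δ) :=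
    four_thirds_le_one_add_one_div hδ hg.le (le_mul_sqrt_mul hN₀.le hg.le h2.le)
      (by positivity) (mul_le_mul_sqrt_mul hN₀.le hh.le h1.le)
  have hrate := log_mul_logb_one_add_le (by norm_num : (1 : ℝ) ≤ 4 / 3) one_lt_two hδ.le
  calc 1 / 2 * log (4 / 3) * logb 2 (1 + δ) ≤ 1 / 2 * δ * logb 2 (4 / 3) := by linarith
    _ ≤ _ := by gcongr; norm_num
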